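/- Let ℓ ≥ 2 and 1 ≤ a ≤ ℓ - 1 be integers, and define c : {0, 1, …, ℓ} → ℤ by c(i) = a·i for 0 ≤ i ≤ ℓ - a and c(i) = (ℓ - a)·(ℓ - i) for ℓ - a ≤ i ≤ ℓ. Then 2·∑_{i=1}^{ℓ-1} c(i)² − 2·∑_{i=1}^{ℓ-2} c(i)·c(i+1) = ℓ·a·(ℓ - a). -/

import Mathlib

/-!
The left-hand side is the Dirichlet energy `∑ (c (i+1) - c i)²` of `c` on `0, …, ℓ`, written out
using `c 0 = c ℓ = 0`. The function `c` is a tent: it rises with slope `a` for `ℓ - a` steps and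
falls with slope `-(ℓ - a)` for `a` steps, so its energy is `(ℓ - a) a² + a (ℓ - a)² = ℓ a (ℓ - a)`.
-/

open Finset

namespace Finset

variable {R : Type*} [CommRing R]

theorem sum_Ico_sq_sub_eq (f : ℤ → R) {n : ℤ} (hn : 2 ≤ n) :
    ∑ i ∈ Ico 0 n, (f (i + 1) - f i) ^ 2 =
      f 0 ^ 2 - 2 * f 0 * f 1 + 2 * ∑ i ∈ Icc 1 (n - 1), f i ^ 2
        - 2 * ∑ i ∈ Icc 1 (n - 2), f i * f (i + 1) - 2 * f (n - 1) * f n + f n ^ 2 := by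
  induction n, hn using Int.leInduction with
  | base =>
    rw [show Ico (0 : ℤ) 2 = {0, 1} by rfl, show Icc (1 : ℤ) (2 - 1) = {1} by rfl,
      show Icc (1 : ℤ) (2 - 2) = ∅ by rfl, sum_pair zero_ne_one, sum_singleton, sum_empty]
    ring_nf
  | succ n hn ih =>
    have hsq : ∑ i ∈ Icc 1 n, f i ^ 2 = ∑ i ∈ Icc 1 (n - 1), f i ^ 2 + f n ^ 2 := by
      rw [← insert_Icc_sub_one_right_eq_Icc (by omega), sum_insert (by simp), add_comm]
    have hmul : ∑ i ∈ Icc 1 (n - 1), f i * f (i + 1) =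
        ∑ i ∈ Icc 1 (n - 2), f i * f (i + 1) + f (n - 1) * f n := by
      rw [← insert_Icc_sub_one_right_eq_Icc (by omega), sum_insert (by simp), add_comm,
        sub_add_cancel, show n - 1 - 1 = n - 2 by ring]
    rw [← sum_Ico_add_eq_sum_Ico_add_one (by omega), ih, add_sub_cancel_right,
      show n + 1 - 2 = n - 1 by ring, hsq, hmul]
    ring

theorem sum_Ico_sq_sub_eq_of_eq_zero (f : ℤ → R) {n : ℤ} (hn : 2 ≤ n) (h₀ : f 0 = 0)
    (hₙ : f n = 0) :
    ∑ i ∈ Ico 0 n, (f (i + 1) - f i) ^ 2 =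
      2 * ∑ i ∈ Icc 1 (n - 1), f i ^ 2 - 2 * ∑ i ∈ Icc 1 (n - 2), f i * f (i + 1) := by
  rw [sum_Ico_sq_sub_eq f hn, h₀, hₙ]
  ring

theorem sum_Ico_sq_sub_of_sub_eq (f : ℤ → R) {m n : ℤ} (hmn : m ≤ n) (d : R)
    (hd : ∀ i ∈ Ico m n, f (i + 1) - f i = d) :
    ∑ i ∈ Ico m n, (f (i + 1) - f i) ^ 2 = (n - m : ℤ) * d ^ 2 := by
  rw [sum_congr rfl fun i hi => by rw [hd i hi], sum_const, Int.card_Ico, nsmul_eq_mul,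
    ← Int.cast_natCast, Int.toNat_of_nonneg (by omega)]

theorem sum_Ico_consecutive' {α M : Type*} [LinearOrder α] [LocallyFiniteOrder α]
    [AddCommMonoid M] (f : α → M) {m n k : α} (hmn : m ≤ n) (hnk : n ≤ k) :
    ∑ i ∈ Ico m n, f i + ∑ i ∈ Ico n k, f i = ∑ i ∈ Ico m k, f i := by
  rw [← sum_union (Ico_disjoint_Ico_consecutive m n k), Ico_union_Ico_eq_Ico hmn hnk]

end Finset

/-- The quadratic identity computing the self-intersection of the vanishing divisor
of the universal `ℓ`-th root homomorphism along a chain of `(-2)`-curves. -/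
theorem chain_selfintersection_identity (ℓ a : ℤ) (hℓ : 2 ≤ ℓ) (ha : 1 ≤ a)
    (ha' : a ≤ ℓ - 1)
    (c : ℤ → ℤ)
    (hc : ∀ i, 0 ≤ i → i ≤ ℓ →
      c i = if i ≤ ℓ - a then a * i else (ℓ - a) * (ℓ - i)) :
    2 * (∑ i ∈ Finset.Icc 1 (ℓ - 1), (c i) ^ 2)
      - 2 * (∑ i ∈ Finset.Icc 1 (ℓ - 2), c i * c (i + 1)) = ℓ * a * (ℓ - a) := by
  have rise : ∀ i ∈ Ico 0 (ℓ - a), c (i + 1) - c i = a := by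
    intro i hi
    rw [mem_Ico] at hi
    rw [hc i (by omega) (by omega), hc (i + 1) (by omega) (by omega), if_pos (by omega),
      if_pos (by omega)]
    ring
  have fall : ∀ i ∈ Ico (ℓ - a) ℓ, c (i + 1) - c i = -(ℓ - a) := by
    intro i hi
    rw [mem_Ico] at hi
    rw [hc i (by omega) (by omega), hc (i + 1) (by omega) (by omega), if_neg (by omega)]
    split_ifs
    · rw [show i = ℓ - a by omega]; ring
    · ring
  have h₀ : c 0 = 0 := by simpa [show a ≤ ℓ by omega] using hc 0 le_rfl (by omega)
  have hₗ : c ℓ = 0 := by simpa [show ¬ℓ ≤ ℓ - a by omega] using hc ℓ (by omega) le_rfl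
  rw [← sum_Ico_sq_sub_eq_of_eq_zero c hℓ h₀ hₗ,
    ← sum_Ico_consecutive' _ (show 0 ≤ ℓ - a by omega) (show ℓ - a ≤ ℓ by omega),
    sum_Ico_sq_sub_of_sub_eq c (by omega) _ rise, sum_Ico_sq_sub_of_sub_eq c (by omega) _ fall]
  push_cast
  ring
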